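/- Every arrowed daisy graph whose underlying multigraph (V, E) is a forest (contains no cycle, where a cycle is a closed walk using pairwise distinct edges) is gradable. -/
import Mathlib


/-!
Model of a daisy graph (DG): finite vertex set `V`, finite edge set `E`, darts
`D = E × Bool` with an endpoint map.  Every vertex has degree 1 or 6; at each
degree-6 vertex ("triple value") the six darts are partitioned into three
unordered pairs ("consecutive pairs"), encoded by a fixed-point-free
endpoint-preserving involution `mate` on the darts at that vertex.
An arrowed daisy graph (ADG) additionally selects, in each consecutive pair,
exactly one preferred dart (`pref`).
-/
structure ADG (V E : Type) [Fintype V] [DecidableEq V] [Fintype E] where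
  /-- the endpoint of each dart -/
  endpoint : E × Bool → V
  /-- the other dart of the consecutive pair of a dart (at triple values) -/
  mate : E × Bool → E × Bool
  /-- the preferred-dart choice: `pref d = true` means `d` is preferred -/
  pref : E × Bool → Bool
  /-- every vertex has degree 1 or 6 -/
  degree_cond : ∀ w : V,
      (Finset.univ.filter fun d : E × Bool => endpoint d = w).card = 1 ∨
      (Finset.univ.filter fun d : E × Bool => endpoint d = w).card = 6
  mate_endpoint : ∀ d, endpoint (mate d) = endpoint d
  mate_invol : ∀ d, mate (mate d) = d
  /-- at a triple value, `mate` is fixed-point free: it pairs the six darts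
  into three consecutive pairs -/
  mate_ne : ∀ d, (Finset.univ.filter fun d' : E × Bool =>
      endpoint d' = endpoint d).card = 6 → mate d ≠ d
  /-- at a degree-1 vertex there are no consecutive pairs -/
  mate_fix : ∀ d, (Finset.univ.filter fun d' : E × Bool =>
      endpoint d' = endpoint d).card = 1 → mate d = d
  /-- in each consecutive pair exactly one dart is preferred -/
  pref_pair : ∀ d, (Finset.univ.filter fun d' : E × Bool =>
      endpoint d' = endpoint d).card = 6 → pref d = !pref (mate d)

variable {V E : Type} [Fintype V] [DecidableEq V] [Fintype E]

/-- A triple value is a vertex of degree 6. -/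
def ADG.IsTriple (G : ADG V E) (w : V) : Prop :=
  (Finset.univ.filter fun d : E × Bool => G.endpoint d = w).card = 6

/-- The edge `e` is preferred at the vertex `w`: some dart of `e` with
endpoint `w` is preferred. -/
def ADG.PreferredAt (G : ADG V E) (e : E) (w : V) : Prop :=
  ∃ b : Bool, G.endpoint (e, b) = w ∧ G.pref (e, b) = true

/-- The edge `e` is non-preferred at the vertex `w`: some dart of `e` with
endpoint `w` is not preferred. -/
def ADG.NonPreferredAt (G : ADG V E) (e : E) (w : V) : Prop :=
  ∃ b : Bool, G.endpoint (e, b) = w ∧ G.pref (e, b) = false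

/-- A grading: at each triple value `w` there is `a(w) : ℤ` with the preferred
edges at `w` graded `a(w) + 1` and the non-preferred ones graded `a(w)`. -/
def ADG.IsGrading (G : ADG V E) (g : E → ℤ) : Prop :=
  ∀ w : V, G.IsTriple w → ∃ a : ℤ,
    (∀ e : E, G.PreferredAt e w → g e = a + 1) ∧
    (∀ e : E, G.NonPreferredAt e w → g e = a)

/-- A grade-obstructing loop: an edge whose two darts have the same endpoint,
one dart preferred and the other non-preferred. -/
def ADG.GradeObstructingLoop (G : ADG V E) (e : E) : Prop :=
  ∃ w : V, G.endpoint (e, false) = w ∧ G.endpoint (e, true) = w ∧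
    G.pref (e, false) ≠ G.pref (e, true)

/-- The edge `e` joins the vertices `u` and `u'`: its two darts have endpoints
`u` and `u'` (in some order). -/
def ADG.Joins (G : ADG V E) (e : E) (u u' : V) : Prop :=
  (G.endpoint (e, false) = u ∧ G.endpoint (e, true) = u') ∨
  (G.endpoint (e, false) = u' ∧ G.endpoint (e, true) = u)

/-- The underlying multigraph contains a cycle: a closed walk of length `r ≥ 1`
using pairwise distinct edges. -/
def ADG.HasCycle (G : ADG V E) : Prop :=
  ∃ (r : ℕ) (ws : Fin (r + 1) → V) (es : Fin r → E),
    1 ≤ r ∧ Function.Injective es ∧ ws 0 = ws (Fin.last r) ∧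
    ∀ k : Fin r, G.Joins (es k) (ws k.castSucc) (ws k.succ)

/-- Auxiliary value: `1` if the dart `(e, b)` is preferred, `0` otherwise. -/
private def sVal (G : ADG V E) (e : E) (b : Bool) : ℤ :=
  if G.pref (e, b) = true then 1 else 0

/-- Build a cycle from ℕ-indexed data. -/
private lemma hasCycle_nat (G : ADG V E) (r : ℕ) (hr : 1 ≤ r) (ws : ℕ → V) (es : ℕ → E)
    (hinj : ∀ i < r, ∀ j < r, es i = es j → i = j)
    (hclose : ws 0 = ws r)
    (hjoin : ∀ k < r, G.Joins (es k) (ws k) (ws (k + 1))) : G.HasCycle := by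
  refine ⟨r, fun i => ws i.val, fun i => es i.val, hr, ?_, ?_, ?_⟩
  · intro i j hij
    exact Fin.ext (hinj i.val i.isLt j.val j.isLt hij)
  · simpa using hclose
  · intro k
    have h := hjoin k.val k.isLt
    simpa using h

private lemma no_loop (G : ADG V E) (h : ¬ G.HasCycle) (e : E) :
    G.endpoint (e, false) ≠ G.endpoint (e, true) := by
  intro heq
  exact h (hasCycle_nat G 1 le_rfl (fun _ => G.endpoint (e, false)) (fun _ => e)
    (fun i hi j hj _ => by omega) rfl
    (fun k hk => Or.inl ⟨rfl, heq.symm⟩))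

/-- A walk of length `n` with pairwise distinct vertices, using edges of `S`. -/
private def WalkP (G : ADG V E) (S : Finset E) (n : ℕ) : Prop :=
  ∃ ws : ℕ → V, ∃ es : ℕ → E,
    (∀ i ≤ n, ∀ j ≤ n, ws i = ws j → i = j) ∧
    ∀ k < n, es k ∈ S ∧ G.Joins (es k) (ws k) (ws (k + 1))

private lemma walkP_lt (G : ADG V E) (S : Finset E) (n : ℕ) (hP : WalkP G S n) :
    n < Fintype.card V := by
  obtain ⟨ws, es, hinj, -⟩ := hP
  have hcard : Fintype.card (Fin (n + 1)) ≤ Fintype.card V :=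
    Fintype.card_le_of_injective (fun i => ws i.val)
      (fun i j hij => Fin.ext
        (hinj i.val (Nat.le_of_lt_succ i.isLt) j.val (Nat.le_of_lt_succ j.isLt) hij))
  simpa using hcard

/-- In a vertex-injective walk, the edges are pairwise distinct. -/
private lemma es_inj (G : ADG V E) {n : ℕ} {ws : ℕ → V} {es : ℕ → E}
    (hinj : ∀ i ≤ n, ∀ j ≤ n, ws i = ws j → i = j)
    (hwalk : ∀ k < n, G.Joins (es k) (ws k) (ws (k + 1))) :
    ∀ k < n, ∀ l < n, es k = es l → k = l := by
  intro k hk l hl heq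
  have h1 := hwalk k hk
  have h2 := hwalk l hl
  rw [heq] at h1
  rcases h1 with ⟨hf1, ht1⟩ | ⟨hf1, ht1⟩ <;> rcases h2 with ⟨hf2, ht2⟩ | ⟨hf2, ht2⟩
  · exact hinj k hk.le l hl.le (hf2.symm.trans hf1).symm
  · have e1 := hinj k hk.le (l + 1) hl (hf2.symm.trans hf1).symm
    have e2 := hinj (k + 1) hk l hl.le (ht2.symm.trans ht1).symm
    omega
  · have e1 := hinj (k + 1) hk l hl.le (hf2.symm.trans hf1).symm
    have e2 := hinj k hk.le (l + 1) hl (ht2.symm.trans ht1).symm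
    omega
  · have e1 := hinj (k + 1) hk (l + 1) hl (hf2.symm.trans hf1).symm
    omega

/-- In an acyclic multigraph, every nonempty edge set has a "leaf" edge:
an edge `e` with an endpoint touched by no other edge of the set. -/
private lemma exists_leaf (G : ADG V E) (h : ¬ G.HasCycle) (S : Finset E) (hS : S.Nonempty) :
    ∃ e ∈ S, ∃ b : Bool, ∀ e' ∈ S, e' ≠ e →
      G.endpoint (e', false) ≠ G.endpoint (e, b) ∧
      G.endpoint (e', true) ≠ G.endpoint (e, b) := by
  classical
  obtain ⟨e₀, he₀⟩ := hS
  have hV : 1 ≤ Fintype.card V := Fintype.card_pos_iff.mpr ⟨G.endpoint (e₀, false)⟩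
  have hP1 : WalkP G S 1 := by
    refine ⟨fun k => if k = 0 then G.endpoint (e₀, false) else G.endpoint (e₀, true),
      fun _ => e₀, ?_, ?_⟩
    · intro i hi j hj hw
      have hne := no_loop G h e₀
      interval_cases i <;> interval_cases j <;> simp_all
    · intro k hk
      have hk0 : k = 0 := by omega
      subst hk0
      exact ⟨he₀, Or.inl ⟨by simp, by simp⟩⟩
  set N := Nat.findGreatest (WalkP G S) (Fintype.card V) with hNdef
  have hPN : WalkP G S N := Nat.findGreatest_spec hV hP1
  have hN1 : 1 ≤ N := Nat.le_findGreatest hV hP1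
  have hnot : ¬ WalkP G S (N + 1) := by
    intro hP
    have hb := walkP_lt G S (N + 1) hP
    exact absurd hP (Nat.findGreatest_is_greatest (Nat.lt_succ_self N) (by omega))
  obtain ⟨ws, es, hinj, hwalk⟩ := hPN
  have hesinj := es_inj G hinj (fun k hk => (hwalk k hk).2)
  have hlt : N - 1 < N := by omega
  obtain ⟨heS, hjoin⟩ := hwalk (N - 1) hlt
  have hsucc : N - 1 + 1 = N := by omega
  rw [hsucc] at hjoin
  obtain ⟨b, hb⟩ : ∃ b : Bool, G.endpoint (es (N - 1), b) = ws N := by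
    rcases hjoin with ⟨hf, ht⟩ | ⟨hf, ht⟩
    · exact ⟨true, ht⟩
    · exact ⟨false, hf⟩
  refine ⟨es (N - 1), heS, b, ?_⟩
  intro e' he' hne
  have key : ∀ b' : Bool, G.endpoint (e', b') ≠ ws N := by
    intro b' hb'v
    set u := G.endpoint (e', !b') with hu
    -- `e'` is not one of the walk edges
    have hA : ∀ k < N, e' ≠ es k := by
      intro k hk hk'
      have hj := (hwalk k hk).2
      rw [← hk'] at hj
      have hmem : G.endpoint (e', b') = ws k ∨ G.endpoint (e', b') = ws (k + 1) := by
        rcases hj with ⟨hf, ht⟩ | ⟨hf, ht⟩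
        · cases b'
          · exact Or.inl hf
          · exact Or.inr ht
        · cases b'
          · exact Or.inr hf
          · exact Or.inl ht
      rcases hmem with hm | hm
      · have hkN := hinj k hk.le N le_rfl (hm.symm.trans hb'v)
        omega
      · have hkN := hinj (k + 1) hk N le_rfl (hm.symm.trans hb'v)
        exact hne (by rw [hk']; congr 1; omega)
    by_cases hrange : ∃ j ≤ N, u = ws j
    · obtain ⟨j, hjN, hj⟩ := hrange
      by_cases hjn : j = N
      · -- `e'` would be a loop
        have hloop : G.endpoint (e', !b') = G.endpoint (e', b') :=
          hu.symm.trans (hj.trans (by rw [hjn, ← hb'v]))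
        cases b'
        · exact no_loop G h e' hloop.symm
        · exact no_loop G h e' hloop
      · -- `e'` closes a cycle with part of the walk
        have hjlt : j < N := lt_of_le_of_ne hjN hjn
        apply h
        refine hasCycle_nat G (N - j + 1) (by omega)
          (fun k => if k ≤ N - j then ws (j + k) else ws j)
          (fun k => if k < N - j then es (j + k) else e') ?_ ?_ ?_
        · intro i hi l hl heq
          by_cases hi' : i < N - j <;> by_cases hl' : l < N - j
          · simp only [if_pos hi', if_pos hl'] at heq
            have := hesinj (j + i) (by omega) (j + l) (by omega) heq
            omega
          · simp only [if_pos hi', if_neg hl'] at heq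
            exact absurd heq.symm (hA (j + i) (by omega))
          · simp only [if_neg hi', if_pos hl'] at heq
            exact absurd heq (hA (j + l) (by omega))
          · omega
        · simp only [if_pos (by omega : (0 : ℕ) ≤ N - j),
            if_neg (by omega : ¬ N - j + 1 ≤ N - j)]
          simp
        · intro k hk
          by_cases hk' : k < N - j
          · simp only [if_pos hk', if_pos (le_of_lt hk'),
              if_pos (by omega : k + 1 ≤ N - j)]
            have hjj := (hwalk (j + k) (by omega)).2
            rw [show j + k + 1 = j + (k + 1) from by omega] at hjj
            exact hjj
          · have hkeq : k = N - j := by omega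
            subst hkeq
            simp only [if_neg (lt_irrefl _), if_pos le_rfl,
              if_neg (by omega : ¬ N - j + 1 ≤ N - j)]
            have h1 : G.endpoint (e', b') = ws (j + (N - j)) := by
              rw [hb'v]; congr 1; omega
            have h2 : G.endpoint (e', !b') = ws j := hu.symm.trans hj
            cases b'
            · exact Or.inl ⟨h1, h2⟩
            · exact Or.inr ⟨h2, h1⟩
    · -- otherwise the walk can be extended, contradicting maximality
      push_neg at hrange
      apply hnot
      refine ⟨fun k => if k = N + 1 then u else ws k,
        fun k => if k = N then e' else es k, ?_, ?_⟩
      · intro i hi l hl heq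
        beta_reduce at heq
        by_cases hi' : i = N + 1 <;> by_cases hl' : l = N + 1
        · omega
        · rw [if_pos hi', if_neg hl'] at heq
          exact absurd heq (hrange l (by omega))
        · rw [if_neg hi', if_pos hl'] at heq
          exact absurd heq.symm (hrange i (by omega))
        · rw [if_neg hi', if_neg hl'] at heq
          exact hinj i (by omega) l (by omega) heq
      · intro k hk
        beta_reduce
        by_cases hk' : k = N
        · subst hk'
          rw [if_pos rfl]
          refine ⟨he', ?_⟩
          have hx : G.endpoint (e', !b') = u := hu.symm
          rw [if_neg (by omega : ¬ N = N + 1), if_pos rfl]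
          cases b'
          · exact Or.inl ⟨hb'v, hx⟩
          · exact Or.inr ⟨hx, hb'v⟩
        · have hkN : k < N := by omega
          rw [if_neg hk']
          refine ⟨(hwalk k hkN).1, ?_⟩
          have hjj := (hwalk k hkN).2
          rw [if_neg (by omega : ¬ k = N + 1), if_neg (by omega : ¬ k + 1 = N + 1)]
          exact hjj
  exact ⟨fun hc => key false (hc.trans hb), fun hc => key true (hc.trans hb)⟩

/-- The vertex potential: solves the per-edge grading constraints on a forest. -/
private lemma exists_potential (G : ADG V E) (h : ¬ G.HasCycle) (S : Finset E) :
    ∃ a : V → ℤ, ∀ e ∈ S,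
      a (G.endpoint (e, false)) + sVal G e false =
        a (G.endpoint (e, true)) + sVal G e true := by
  classical
  induction S using Finset.strongInduction with
  | _ S ih =>
    rcases S.eq_empty_or_nonempty with rfl | hS
    · exact ⟨fun _ => 0, by simp⟩
    · obtain ⟨e, heS, b, hleaf⟩ := exists_leaf G h S hS
      obtain ⟨a, ha⟩ := ih (S.erase e) (Finset.erase_ssubset heS)
      refine ⟨Function.update a (G.endpoint (e, b))
        (a (G.endpoint (e, !b)) + sVal G e (!b) - sVal G e b), ?_⟩
      intro e' he'
      by_cases hee : e' = e
      · subst hee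
        have hne : G.endpoint (e', !b) ≠ G.endpoint (e', b) := by
          cases b
          · exact Ne.symm (no_loop G h e')
          · exact no_loop G h e'
        cases b
        · simp only [Bool.not_false] at hne ⊢
          rw [Function.update_self, Function.update_of_ne hne]
          ring
        · simp only [Bool.not_true] at hne ⊢
          rw [Function.update_self, Function.update_of_ne hne]
          ring
      · have hcon := ha e' (Finset.mem_erase.mpr ⟨hee, he'⟩)
        have hl := hleaf e' he' hee
        rw [Function.update_of_ne hl.1, Function.update_of_ne hl.2]
        exact hcon

/-- Every arrowed daisy graph whose underlying multigraph is a
forest (contains no cycle) is gradable. -/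
theorem forest_gradable (G : ADG V E) (h : ¬ G.HasCycle) :
    ∃ g : E → ℤ, G.IsGrading g := by
  classical
  obtain ⟨a, ha⟩ := exists_potential G h Finset.univ
  refine ⟨fun e => a (G.endpoint (e, false)) + sVal G e false, ?_⟩
  intro w hw
  refine ⟨a w, ?_, ?_⟩
  · rintro e ⟨b, hbw, hbp⟩
    show a (G.endpoint (e, false)) + sVal G e false = a w + 1
    cases b
    · rw [hbw]
      simp [sVal, hbp]
    · rw [ha e (Finset.mem_univ e), hbw]
      simp [sVal, hbp]
  · rintro e ⟨b, hbw, hbp⟩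
    show a (G.endpoint (e, false)) + sVal G e false = a w
    cases b
    · rw [hbw]
      simp [sVal, hbp]
    · rw [ha e (Finset.mem_univ e), hbw]
      simp [sVal, hbp]
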